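/- arXiv:2004.06909 — 6 statements merged into one kernel-verified Lean document; each statement's English description precedes it below -/
import Mathlib

section
/- Let K and U be J-mode tensors with U = u_1 ⊗ ⋯ ⊗ u_J. If ⟨K, U⟩ = wᵀ diag(u_{j_1}) W diag(u_{j_2}) ŵ for vectors w, ŵ and a matrix W independent of u_{j_1} and u_{j_2} (the identity holding for all choices of u_{j_1}, u_{j_2}), then the bi-marginal projection satisfies P_{j_1,j_2}(K ⊙ U) = diag(w ⊙ u_{j_1}) W diag(u_{j_2} ⊙ ŵ). -/
/-- If `⟨K, U⟩ = wᵀ diag(u_{j₁}) W diag(u_{j₂}) wHat` with `w, W, wHat` independent of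
`u_{j₁}, u_{j₂}`, then `P_{j₁,j₂}(K ⊙ U) = diag(w ⊙ u_{j₁}) W diag(u_{j₂} ⊙ wHat)`. -/
theorem bimarginal_projection_of_inner_product {n J : ℕ}
    (K : (Fin J → Fin n) → ℝ) (u : Fin J → Fin n → ℝ) (j₁ j₂ : Fin J) (hj : j₁ ≠ j₂)
    (w wHat : Fin n → ℝ) (W : Matrix (Fin n) (Fin n) ℝ)
    (h : ∀ v₁ v₂ : Fin n → ℝ,
      ∑ i : Fin J → Fin n,
          K i * ∏ k, Function.update (Function.update u j₁ v₁) j₂ v₂ k (i k)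
        = ∑ x, ∑ y, w x * v₁ x * W x y * v₂ y * wHat y) :
    ∀ x y : Fin n,
      (∑ i : Fin J → Fin n, if i j₁ = x ∧ i j₂ = y then K i * ∏ k, u k (i k) else 0)
        = (w x * u j₁ x) * W x y * (u j₂ y * wHat y) := by
  intro x y
  set v₁ : Fin n → ℝ := fun z => if z = x then u j₁ x else 0 with hv₁
  set v₂ : Fin n → ℝ := fun z => if z = y then u j₂ y else 0 with hv₂
  have key := h v₁ v₂
  set F := Function.update (Function.update u j₁ v₁) j₂ v₂ with hF
  have hFj₁ : F j₁ = v₁ := by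
    rw [hF, Function.update_of_ne hj, Function.update_self]
  have hFj₂ : F j₂ = v₂ := by
    rw [hF, Function.update_self]
  have hFo : ∀ k, k ≠ j₁ → k ≠ j₂ → F k = u k := by
    intro k h1 h2
    rw [hF, Function.update_of_ne h2, Function.update_of_ne h1]
  have hterm : ∀ i : Fin J → Fin n,
      (if i j₁ = x ∧ i j₂ = y then K i * ∏ k, u k (i k) else 0)
        = K i * ∏ k, F k (i k) := by
    intro i
    by_cases h1 : i j₁ = x
    · by_cases h2 : i j₂ = y
      · simp only [h1, h2, and_self, if_true]
        congr 1
        refine Finset.prod_congr rfl fun k _ => ?_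
        by_cases hk2 : k = j₂
        · subst hk2; rw [hFj₂, hv₂]; simp [h2]
        · by_cases hk1 : k = j₁
          · subst hk1; rw [hFj₁, hv₁]; simp [h1]
          · rw [hFo k hk1 hk2]
      · have : F j₂ (i j₂) = 0 := by rw [hFj₂]; simp [hv₂, h2]
        rw [show (∏ k, F k (i k)) = 0 from Finset.prod_eq_zero (Finset.mem_univ j₂) this]
        simp [h2]
    · have : F j₁ (i j₁) = 0 := by rw [hFj₁]; simp [hv₁, h1]
      rw [show (∏ k, F k (i k)) = 0 from Finset.prod_eq_zero (Finset.mem_univ j₁) this]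
      simp [h1]
  rw [Finset.sum_congr rfl fun i _ => hterm i, key]
  simp only [hv₁, hv₂, mul_ite, ite_mul, zero_mul, mul_zero]
  rw [Finset.sum_eq_single x, Finset.sum_eq_single y] <;>
    simp +contextual [mul_assoc, mul_comm, mul_left_comm]
end

section
/- (Tree-structured projection / message passing) Let 𝒯 = (𝒱, ℰ) be a finite tree with vertex set {1,…,J}, let K^{(j_1,j_2)} ∈ ℝ^{n×n}_{>0} be matrices on the edges with K^{(j_2,j_1)} = (K^{(j_1,j_2)})ᵀ, and let u_1,…,u_J ∈ ℝ^n. Define the J-mode tensor (K ⊙ U)_{i_1,…,i_J} = (Π_{(j_1,j_2)∈ℰ} K^{(j_1,j_2)}_{i_{j_1},i_{j_2}}) · (Π_{j} (u_j)_{i_j}). Then for every node j, the marginal projection satisfies P_j(K ⊙ U) = u_j ⊙ ⊙_{k ∈ 𝒩_j} α_{(j,k)}, where the messages α are defined recursively from the leaves by α_{(j,k)} = K^{(j,k)} u_k if k is a leaf, and α_{(j,k)} = K^{(j,k)} ( u_k ⊙ ⊙_{ℓ ∈ 𝒩_k \ {j}} α_{(k,ℓ)} ) otherwise. -/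
open SimpleGraph Finset

section TPMPHelpers

variable {V : Type*} [DecidableEq V] {G : SimpleGraph V}

private lemma tpmp_dist_getVert_le (hc : G.Connected) {j v : V} (p : G.Walk j v) :
    ∀ i : ℕ, G.dist j (p.getVert i) ≤ i := by
  intro i
  induction i with
  | zero => simp
  | succ i ih =>
    by_cases h : i < p.length
    · have hadj := p.adj_getVert_succ h
      calc G.dist j (p.getVert (i+1))
          ≤ G.dist j (p.getVert i) + G.dist (p.getVert i) (p.getVert (i+1)) := hc.dist_triangle
        _ ≤ i + 1 := by
            have := le_of_eq (SimpleGraph.dist_eq_one_iff_adj.mpr hadj)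
            omega
    · push_neg at h
      have h1 : p.getVert (i+1) = v := p.getVert_of_length_le (by omega)
      have h2 : p.getVert i = v := p.getVert_of_length_le h
      rw [h1, ← h2]
      omega

private lemma tpmp_dist_add_of_mem_support (hc : G.Connected) {j w ℓ : V} (p : G.Walk j w)
    (hp : p.length = G.dist j w) (hl : ℓ ∈ p.support) :
    G.dist j ℓ + G.dist ℓ w ≤ G.dist j w := by
  have h1 : G.dist j ℓ ≤ (p.takeUntil ℓ hl).length := SimpleGraph.dist_le _
  have h2 : G.dist ℓ w ≤ (p.dropUntil ℓ hl).length := SimpleGraph.dist_le _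
  have h3 : (p.takeUntil ℓ hl).length + (p.dropUntil ℓ hl).length = p.length := by
    rw [← SimpleGraph.Walk.length_append, SimpleGraph.Walk.take_spec]
  omega

private lemma tpmp_concat_isPath {j a ℓ : V} {p : G.Walk j a} (hp : p.IsPath)
    (h : G.Adj a ℓ) (hns : ℓ ∉ p.support) : (p.concat h).IsPath := by
  rw [← SimpleGraph.Walk.isPath_reverse_iff, SimpleGraph.Walk.reverse_concat]
  rw [SimpleGraph.Walk.cons_isPath_iff]
  exact ⟨(SimpleGraph.Walk.isPath_reverse_iff p).mpr hp, by
    rw [SimpleGraph.Walk.support_reverse]; simpa using hns⟩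

/-- In a tree, adjacent vertices are at different distances from any root. -/
private lemma tpmp_adj_dist_ne (ht : G.IsTree) (j : V) {a b : V} (hab : G.Adj a b) :
    G.dist j a ≠ G.dist j b := by
  intro h
  obtain ⟨Q, hQp, hQl⟩ := ht.isConnected.exists_path_of_dist j a
  have hbs : b ∉ Q.support := by
    intro hbs
    have := tpmp_dist_add_of_mem_support ht.isConnected Q hQl hbs
    rw [← h] at this
    have hba : G.dist b a = 0 := by omega
    have : b = a := (ht.isConnected.dist_eq_zero_iff).mp hba
    exact hab.ne' this
  obtain ⟨P, hPp, hPl⟩ := ht.isConnected.exists_path_of_dist j b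
  have hcp : (Q.concat hab).IsPath := tpmp_concat_isPath hQp hab hbs
  have heq : (⟨P, hPp⟩ : G.Path j b) = ⟨Q.concat hab, hcp⟩ := ht.IsAcyclic.path_unique _ _
  rw [Subtype.mk_eq_mk] at heq
  have hlen : P.length = (Q.concat hab).length := by rw [heq]
  rw [SimpleGraph.Walk.length_concat, hPl, hQl, h] at hlen
  omega

/-- In a tree, the parent (neighbor strictly closer to the root) is unique. -/
private lemma tpmp_parent_unique (ht : G.IsTree) {j a b ℓ : V} (ha : G.Adj a ℓ) (hb : G.Adj b ℓ)
    (hda : G.dist j a + 1 = G.dist j ℓ) (hdb : G.dist j b + 1 = G.dist j ℓ) : a = b := by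
  obtain ⟨Pa, hPap, hPal⟩ := ht.isConnected.exists_path_of_dist j a
  obtain ⟨Pb, hPbp, hPbl⟩ := ht.isConnected.exists_path_of_dist j b
  have hla : ℓ ∉ Pa.support := by
    intro hls
    have h1 := tpmp_dist_add_of_mem_support ht.isConnected Pa hPal hls
    omega
  have hlb : ℓ ∉ Pb.support := by
    intro hls
    have h1 := tpmp_dist_add_of_mem_support ht.isConnected Pb hPbl hls
    omega
  have hpa : (Pa.concat ha).IsPath := tpmp_concat_isPath hPap ha hla
  have hpb : (Pb.concat hb).IsPath := tpmp_concat_isPath hPbp hb hlb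
  have heq : (⟨Pa.concat ha, hpa⟩ : G.Path j ℓ) = ⟨Pb.concat hb, hpb⟩ := ht.IsAcyclic.path_unique _ _
  rw [Subtype.mk_eq_mk] at heq
  obtain ⟨hv, -⟩ := SimpleGraph.Walk.concat_inj heq
  exact hv

/-- In a tree, every non-root vertex has a parent. -/
private lemma tpmp_exists_parent (ht : G.IsTree) {j ℓ : V} (h : ℓ ≠ j) :
    ∃ m, G.Adj m ℓ ∧ G.dist j m + 1 = G.dist j ℓ := by
  have hd : 0 < G.dist j ℓ := ht.isConnected.pos_dist_of_ne (Ne.symm h)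
  obtain ⟨P, hPp, hPl⟩ := ht.isConnected.exists_path_of_dist j ℓ
  set d := G.dist j ℓ with hdd
  have hlt : d - 1 < P.length := by omega
  have hadj := P.adj_getVert_succ hlt
  have hend : P.getVert (d - 1 + 1) = ℓ := by
    have : d - 1 + 1 = P.length := by omega
    rw [this, SimpleGraph.Walk.getVert_length]
  rw [hend] at hadj
  refine ⟨P.getVert (d-1), hadj, ?_⟩
  have h1 : G.dist j (P.getVert (d-1)) ≤ d - 1 := tpmp_dist_getVert_le ht.isConnected P (d-1)
  have h2 : d ≤ G.dist j (P.getVert (d-1)) + 1 := by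
    calc d ≤ G.dist j (P.getVert (d-1)) + G.dist (P.getVert (d-1)) ℓ := ht.isConnected.dist_triangle
      _ ≤ G.dist j (P.getVert (d-1)) + 1 := by
          have := le_of_eq (SimpleGraph.dist_eq_one_iff_adj.mpr hadj); omega
  omega


private lemma tpmp_sum_update {n J : ℕ} (f : (Fin J → Fin n) → ℝ) (ℓ : Fin J) (d : Fin n) :
    (∑ y : Fin n, ∑ i : Fin J → Fin n, if i ℓ = d then f (Function.update i ℓ y) else 0)
      = ∑ i : Fin J → Fin n, f i := by
  classical
  rw [← Finset.sum_product', Finset.univ_product_univ]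
  have hΦ : Function.Involutive
      (fun p : Fin n × (Fin J → Fin n) => (p.2 ℓ, Function.update p.2 ℓ p.1)) := by
    intro p
    simp [Function.update_idem, Function.update_eq_self]
  rw [Fintype.sum_bijective _ hΦ.bijective _
      (fun p : Fin n × (Fin J → Fin n) => if p.1 = d then f p.2 else 0)
      (by
        intro p
        simp only [Function.update_self, Function.update_idem, Function.update_eq_self])]
  rw [Fintype.sum_prod_type]
  simp

private def tpmpF {n J : ℕ} (E : Finset (Fin J × Fin J)) (G : SimpleGraph (Fin J))
    [DecidableRel G.Adj] (K : Fin J → Fin J → Matrix (Fin n) (Fin n) ℝ)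
    (u : Fin J → Fin n → ℝ) (α : Fin J → Fin J → Fin n → ℝ)
    (j : Fin J) (x : Fin n) (T : Finset (Fin J)) : ℝ :=
  ∑ i : Fin J → Fin n,
    if i j = x ∧ ∀ v, v ∉ T → i v = x then
      (∏ e ∈ E.filter (fun e => e.1 ∈ T ∧ e.2 ∈ T), K e.1 e.2 (i e.1) (i e.2)) *
        ∏ v ∈ T, (u v (i v) * ∏ c ∈ G.neighborFinset v \ T, α v c (i v))
    else 0

private lemma tpmpF_base {n J : ℕ} (E : Finset (Fin J × Fin J)) (G : SimpleGraph (Fin J))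
    [DecidableRel G.Adj] (horient : ∀ p ∈ E, (p.2, p.1) ∉ E ∧ p.1 ≠ p.2)
    (K : Fin J → Fin J → Matrix (Fin n) (Fin n) ℝ)
    (u : Fin J → Fin n → ℝ) (α : Fin J → Fin J → Fin n → ℝ) (j : Fin J) (x : Fin n) :
    tpmpF E G K u α j x {j} = u j x * ∏ k ∈ G.neighborFinset j, α j k x := by
  classical
  rw [tpmpF, Finset.sum_eq_single (fun _ => x)]
  · rw [if_pos ⟨rfl, fun _ _ => rfl⟩]
    have hfil : E.filter (fun e => e.1 ∈ ({j} : Finset (Fin J)) ∧ e.2 ∈ ({j} : Finset (Fin J)))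
        = ∅ := by
      rw [Finset.filter_eq_empty_iff]
      intro e he hmem
      simp only [Finset.mem_singleton] at hmem
      exact (horient e he).2 (hmem.1.trans hmem.2.symm)
    rw [hfil]
    have hnb : G.neighborFinset j \ {j} = G.neighborFinset j := by
      rw [Finset.sdiff_eq_self_iff_disjoint, Finset.disjoint_singleton_right]
      simp
    simp [hnb]
  · intro i _ hne
    rw [if_neg]
    rintro ⟨h1, h2⟩
    apply hne
    funext v
    by_cases hv : v = j
    · rw [hv]; exact h1
    · exact h2 v (by simp [hv])
  · intro h; exact absurd (Finset.mem_univ _) h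

private lemma tpmpF_univ {n J : ℕ} (E : Finset (Fin J × Fin J)) (G : SimpleGraph (Fin J))
    [DecidableRel G.Adj] (K : Fin J → Fin J → Matrix (Fin n) (Fin n) ℝ)
    (u : Fin J → Fin n → ℝ) (α : Fin J → Fin J → Fin n → ℝ) (j : Fin J) (x : Fin n) :
    tpmpF E G K u α j x Finset.univ
      = ∑ i : Fin J → Fin n, if i j = x then
          (∏ e ∈ E, K e.1 e.2 (i e.1) (i e.2)) * ∏ k, u k (i k) else 0 := by
  classical
  rw [tpmpF]
  apply Finset.sum_congr rfl
  intro i _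
  have hc : (i j = x ∧ ∀ v, v ∉ (Finset.univ : Finset (Fin J)) → i v = x) ↔ i j = x := by
    simp
  rw [if_congr hc rfl rfl]
  congr 1
  congr 1
  · apply Finset.prod_congr _ (fun _ _ => rfl)
    simp
  · apply Finset.prod_congr rfl
    intro v _
    have : G.neighborFinset v \ Finset.univ = ∅ := by
      simp [Finset.sdiff_eq_empty_iff_subset]
    rw [this, Finset.prod_empty, mul_one]

private lemma tpmp_filter_insert {J : ℕ} (E : Finset (Fin J × Fin J)) (G : SimpleGraph (Fin J))
    [DecidableRel G.Adj]
    (hG : ∀ a b, G.Adj a b ↔ ((a, b) ∈ E ∨ (b, a) ∈ E))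
    (horient : ∀ p ∈ E, (p.2, p.1) ∉ E ∧ p.1 ≠ p.2)
    (T : Finset (Fin J)) (ℓ m : Fin J)
    (hlT : ℓ ∉ T) (hmT : m ∈ T)
    (huniq : ∀ w ∈ T, G.Adj w ℓ → w = m)
    (e₀ : Fin J × Fin J) (he₀E : e₀ ∈ E) (he₀ : e₀ = (m, ℓ) ∨ e₀ = (ℓ, m)) :
    E.filter (fun e => e.1 ∈ insert ℓ T ∧ e.2 ∈ insert ℓ T)
      = insert e₀ (E.filter (fun e => e.1 ∈ T ∧ e.2 ∈ T)) := by
  classical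
  ext e
  simp only [Finset.mem_insert, Finset.mem_filter]
  constructor
  · rintro ⟨heE, h1', h2'⟩
    have hadj' : G.Adj e.1 e.2 := (hG _ _).mpr (Or.inl heE)
    by_cases ha : e.1 ∈ T
    · by_cases hb : e.2 ∈ T
      · right; exact ⟨heE, ha, hb⟩
      · have he2 : e.2 = ℓ := by
          rcases h2' with h | h
          · exact h
          · exact absurd h hb
        have he1 : e.1 = m := huniq e.1 ha (he2 ▸ hadj')
        have heq : e = (m, ℓ) := Prod.ext he1 he2
        rcases he₀ with h | h
        · left; rw [heq, h]
        · exfalso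
          have h2 : (ℓ, m) ∈ E := h ▸ he₀E
          exact (horient (ℓ, m) h2).1 (heq ▸ heE)
    · have he1 : e.1 = ℓ := by
        rcases h1' with h | h
        · exact h
        · exact absurd h ha
      have he2T : e.2 ∈ T := by
        rcases h2' with h | h
        · exfalso; exact (horient e heE).2 (he1.trans h.symm)
        · exact h
      have hm2 : e.2 = m := huniq e.2 he2T (he1 ▸ hadj'.symm)
      have heq : e = (ℓ, m) := Prod.ext he1 hm2
      rcases he₀ with h | h
      · exfalso
        have h2 : (m, ℓ) ∈ E := h ▸ he₀E
        exact (horient (m, ℓ) h2).1 (heq ▸ heE)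
      · left; rw [heq, h]
  · rintro (rfl | ⟨heE, h1', h2'⟩)
    · refine ⟨he₀E, ?_, ?_⟩ <;> rcases he₀ with h | h <;> rw [h] <;> simp [hmT]
    · exact ⟨heE, Or.inr h1', Or.inr h2'⟩

private lemma tpmpF_step {n J : ℕ} (E : Finset (Fin J × Fin J)) (G : SimpleGraph (Fin J))
    [DecidableRel G.Adj]
    (hG : ∀ a b, G.Adj a b ↔ ((a, b) ∈ E ∨ (b, a) ∈ E))
    (horient : ∀ p ∈ E, (p.2, p.1) ∉ E ∧ p.1 ≠ p.2)
    (K : Fin J → Fin J → Matrix (Fin n) (Fin n) ℝ)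
    (hsym : ∀ a b, K b a = (K a b).transpose)
    (u : Fin J → Fin n → ℝ) (α : Fin J → Fin J → Fin n → ℝ)
    (hα : ∀ a b, G.Adj a b → ∀ x,
      α a b x = ∑ y, K a b x y * (u b y * ∏ c ∈ (G.neighborFinset b).erase a, α b c y))
    (j : Fin J) (x : Fin n) (T : Finset (Fin J)) (ℓ m : Fin J)
    (hlT : ℓ ∉ T) (hlj : ℓ ≠ j) (hmT : m ∈ T) (hadj : G.Adj m ℓ)
    (huniq : ∀ w ∈ T, G.Adj w ℓ → w = m) :
    tpmpF E G K u α j x (insert ℓ T) = tpmpF E G K u α j x T := by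
  classical
  set T' := insert ℓ T with hT'
  have hml : m ≠ ℓ := hadj.ne
  have hlT' : ℓ ∈ T' := Finset.mem_insert_self _ _
  -- neighbor-set facts
  have hNl : G.neighborFinset ℓ \ T' = (G.neighborFinset ℓ).erase m := by
    ext c
    simp only [Finset.mem_sdiff, Finset.mem_erase, Finset.mem_insert, hT',
      SimpleGraph.mem_neighborFinset, not_or]
    constructor
    · rintro ⟨hc, hcl, hcT⟩
      exact ⟨fun h => hcT (h ▸ hmT), hc⟩
    · rintro ⟨hcm, hc⟩
      refine ⟨hc, fun h => G.irrefl (h ▸ hc), fun hcT => hcm (huniq c hcT hc.symm)⟩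
  have hNv : ∀ v ∈ T, v ≠ m → G.neighborFinset v \ T' = G.neighborFinset v \ T := by
    intro v hv hvm
    ext c
    simp only [Finset.mem_sdiff, Finset.mem_insert, hT', SimpleGraph.mem_neighborFinset, not_or]
    constructor
    · rintro ⟨hc, -, hcT⟩
      exact ⟨hc, hcT⟩
    · rintro ⟨hc, hcT⟩
      refine ⟨hc, fun h => hvm (huniq v hv (h ▸ hc)), hcT⟩
  have hlNm' : ℓ ∉ G.neighborFinset m \ T' := fun h => (Finset.mem_sdiff.mp h).2 hlT'
  have hNm : G.neighborFinset m \ T = insert ℓ (G.neighborFinset m \ T') := by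
    ext c
    simp only [Finset.mem_sdiff, Finset.mem_insert, hT', SimpleGraph.mem_neighborFinset, not_or]
    constructor
    · rintro ⟨hc, hcT⟩
      by_cases h : c = ℓ
      · exact Or.inl h
      · exact Or.inr ⟨hc, h, hcT⟩
    · rintro (rfl | ⟨hc, -, hcT⟩)
      · exact ⟨hadj, hlT⟩
      · exact ⟨hc, hcT⟩
  -- the distinguished edge
  obtain ⟨e₀, he₀E, he₀or⟩ : ∃ e₀ ∈ E, e₀ = (m, ℓ) ∨ e₀ = (ℓ, m) := by
    rcases (hG m ℓ).mp hadj with h | h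
    · exact ⟨(m, ℓ), h, Or.inl rfl⟩
    · exact ⟨(ℓ, m), h, Or.inr rfl⟩
  have he₀nf : e₀ ∉ E.filter (fun e => e.1 ∈ T ∧ e.2 ∈ T) := by
    intro h
    rw [Finset.mem_filter] at h
    rcases he₀or with h' | h' <;> rw [h'] at h
    · exact hlT h.2.2
    · exact hlT h.2.1
  have hfil := tpmp_filter_insert E G hG horient T ℓ m hlT hmT huniq e₀ he₀E he₀or
  have hKe₀ : ∀ z : Fin J → Fin n, K e₀.1 e₀.2 (z e₀.1) (z e₀.2) = K m ℓ (z m) (z ℓ) := by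
    intro z
    rcases he₀or with h | h <;> rw [h]
    rw [hsym m ℓ, Matrix.transpose_apply]
  -- main computation
  rw [tpmpF, tpmpF]
  rw [← tpmp_sum_update (fun i : Fin J → Fin n =>
    if i j = x ∧ ∀ v, v ∉ T' → i v = x then
      (∏ e ∈ E.filter (fun e => e.1 ∈ T' ∧ e.2 ∈ T'), K e.1 e.2 (i e.1) (i e.2)) *
        ∏ v ∈ T', (u v (i v) * ∏ c ∈ G.neighborFinset v \ T', α v c (i v))
    else 0) ℓ x]
  rw [Finset.sum_comm]
  apply Finset.sum_congr rfl
  intro i _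
  by_cases hC : i j = x ∧ ∀ v, v ∉ T → i v = x
  · have hix : i ℓ = x := hC.2 ℓ hlT
    rw [if_pos hC]
    have hcond : ∀ y : Fin n,
        (Function.update i ℓ y) j = x ∧ ∀ v, v ∉ T' → (Function.update i ℓ y) v = x := by
      intro y
      constructor
      · rw [Function.update_of_ne (Ne.symm hlj)]; exact hC.1
      · intro v hv
        have hvl : v ≠ ℓ := fun h => hv (h ▸ hlT')
        rw [Function.update_of_ne hvl]
        exact hC.2 v (fun hvT => hv (Finset.mem_insert_of_mem hvT))
    have hval : ∀ y : Fin n,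
        (if i ℓ = x then
          (if (Function.update i ℓ y) j = x ∧ ∀ v, v ∉ T' → (Function.update i ℓ y) v = x then
            (∏ e ∈ E.filter (fun e => e.1 ∈ T' ∧ e.2 ∈ T'),
              K e.1 e.2 ((Function.update i ℓ y) e.1) ((Function.update i ℓ y) e.2)) *
              ∏ v ∈ T', (u v ((Function.update i ℓ y) v) *
                ∏ c ∈ G.neighborFinset v \ T', α v c ((Function.update i ℓ y) v))
          else 0)
        else 0)
        = (K m ℓ (i m) y * (u ℓ y * ∏ c ∈ (G.neighborFinset ℓ).erase m, α ℓ c y)) *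
            ((∏ e ∈ E.filter (fun e => e.1 ∈ T ∧ e.2 ∈ T), K e.1 e.2 (i e.1) (i e.2)) *
              ∏ v ∈ T, (u v (i v) * ∏ c ∈ G.neighborFinset v \ T', α v c (i v))) := by
      intro y
      rw [if_pos hix, if_pos (hcond y)]
      have hupd : ∀ v ∈ T, Function.update i ℓ y v = i v :=
        fun v hv => Function.update_of_ne (by rintro rfl; exact hlT hv) _ _
      have hE1 : (∏ e ∈ E.filter (fun e => e.1 ∈ T' ∧ e.2 ∈ T'),
            K e.1 e.2 (Function.update i ℓ y e.1) (Function.update i ℓ y e.2))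
          = K m ℓ (i m) y *
            ∏ e ∈ E.filter (fun e => e.1 ∈ T ∧ e.2 ∈ T), K e.1 e.2 (i e.1) (i e.2) := by
        rw [hfil, Finset.prod_insert he₀nf, hKe₀]
        congr 1
        · rw [Function.update_of_ne hml, Function.update_self]
        · apply Finset.prod_congr rfl
          intro e he
          rw [Finset.mem_filter] at he
          rw [Function.update_of_ne (by rintro rfl; exact hlT he.2.1),
            Function.update_of_ne (by rintro rfl; exact hlT he.2.2)]
      have hsplit : (∏ v ∈ T', (u v (Function.update i ℓ y v) *
            ∏ c ∈ G.neighborFinset v \ T', α v c (Function.update i ℓ y v)))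
          = (u ℓ (Function.update i ℓ y ℓ) *
              ∏ c ∈ G.neighborFinset ℓ \ T', α ℓ c (Function.update i ℓ y ℓ)) *
            ∏ v ∈ T, (u v (Function.update i ℓ y v) *
              ∏ c ∈ G.neighborFinset v \ T', α v c (Function.update i ℓ y v)) := by
        rw [hT', Finset.prod_insert hlT]
      have hV2 : (∏ v ∈ T, (u v (Function.update i ℓ y v) *
            ∏ c ∈ G.neighborFinset v \ T', α v c (Function.update i ℓ y v)))
          = ∏ v ∈ T, (u v (i v) * ∏ c ∈ G.neighborFinset v \ T', α v c (i v)) :=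
        Finset.prod_congr rfl (fun v hv => by rw [hupd v hv])
      rw [hsplit, hV2, hE1, Function.update_self, hNl]
      ring
    have hPT : (∏ v ∈ T, (u v (i v) * ∏ c ∈ G.neighborFinset v \ T, α v c (i v)))
        = α m ℓ (i m) * ∏ v ∈ T, (u v (i v) * ∏ c ∈ G.neighborFinset v \ T', α v c (i v)) := by
      rw [← Finset.mul_prod_erase T _ hmT,
        ← Finset.mul_prod_erase T
          (fun v => u v (i v) * ∏ c ∈ G.neighborFinset v \ T', α v c (i v)) hmT]
      have herase : (∏ v ∈ T.erase m, (u v (i v) * ∏ c ∈ G.neighborFinset v \ T, α v c (i v)))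
          = ∏ v ∈ T.erase m, (u v (i v) * ∏ c ∈ G.neighborFinset v \ T', α v c (i v)) :=
        Finset.prod_congr rfl (fun v hv => by
          rw [hNv v (Finset.mem_of_mem_erase hv) (Finset.ne_of_mem_erase hv)])
      rw [herase, hNm, Finset.prod_insert hlNm']
      ring
    calc (∑ y : Fin n,
          if i ℓ = x then
            if (Function.update i ℓ y) j = x ∧ ∀ v, v ∉ T' → (Function.update i ℓ y) v = x then
              (∏ e ∈ E.filter (fun e => e.1 ∈ T' ∧ e.2 ∈ T'),
                K e.1 e.2 ((Function.update i ℓ y) e.1) ((Function.update i ℓ y) e.2)) *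
                ∏ v ∈ T', (u v ((Function.update i ℓ y) v) *
                  ∏ c ∈ G.neighborFinset v \ T', α v c ((Function.update i ℓ y) v))
            else 0
          else 0)
        = ∑ y : Fin n,
            (K m ℓ (i m) y * (u ℓ y * ∏ c ∈ (G.neighborFinset ℓ).erase m, α ℓ c y)) *
              ((∏ e ∈ E.filter (fun e => e.1 ∈ T ∧ e.2 ∈ T), K e.1 e.2 (i e.1) (i e.2)) *
                ∏ v ∈ T, (u v (i v) * ∏ c ∈ G.neighborFinset v \ T', α v c (i v))) :=
          Finset.sum_congr rfl (fun y _ => hval y)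
      _ = (∑ y : Fin n, K m ℓ (i m) y *
              (u ℓ y * ∏ c ∈ (G.neighborFinset ℓ).erase m, α ℓ c y)) *
            ((∏ e ∈ E.filter (fun e => e.1 ∈ T ∧ e.2 ∈ T), K e.1 e.2 (i e.1) (i e.2)) *
              ∏ v ∈ T, (u v (i v) * ∏ c ∈ G.neighborFinset v \ T', α v c (i v))) := by
          rw [← Finset.sum_mul]
      _ = α m ℓ (i m) *
            ((∏ e ∈ E.filter (fun e => e.1 ∈ T ∧ e.2 ∈ T), K e.1 e.2 (i e.1) (i e.2)) *
              ∏ v ∈ T, (u v (i v) * ∏ c ∈ G.neighborFinset v \ T', α v c (i v))) := by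
          rw [← hα m ℓ hadj (i m)]
      _ = (∏ e ∈ E.filter (fun e => e.1 ∈ T ∧ e.2 ∈ T), K e.1 e.2 (i e.1) (i e.2)) *
            ∏ v ∈ T, (u v (i v) * ∏ c ∈ G.neighborFinset v \ T, α v c (i v)) := by
          rw [hPT]; ring
  · rw [if_neg hC]
    apply Finset.sum_eq_zero
    intro y _
    by_cases hix : i ℓ = x
    · rw [if_pos hix, if_neg]
      rintro ⟨h1, h2⟩
      apply hC
      constructor
      · rw [Function.update_of_ne (Ne.symm hlj)] at h1; exact h1
      · intro v hvT
        by_cases hvl : v = ℓ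
        · rw [hvl]; exact hix
        · have := h2 v (by
            rw [hT', Finset.mem_insert]
            push_neg
            exact ⟨hvl, hvT⟩)
          rw [Function.update_of_ne hvl] at this
          exact this
    · rw [if_neg hix]


private lemma tpmpF_closed {n J : ℕ} (E : Finset (Fin J × Fin J)) (G : SimpleGraph (Fin J))
    [DecidableRel G.Adj]
    (hG : ∀ a b, G.Adj a b ↔ ((a, b) ∈ E ∨ (b, a) ∈ E))
    (horient : ∀ p ∈ E, (p.2, p.1) ∉ E ∧ p.1 ≠ p.2)
    (htree : G.IsTree)
    (K : Fin J → Fin J → Matrix (Fin n) (Fin n) ℝ)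
    (hsym : ∀ a b, K b a = (K a b).transpose)
    (u : Fin J → Fin n → ℝ) (α : Fin J → Fin J → Fin n → ℝ)
    (hα : ∀ a b, G.Adj a b → ∀ x,
      α a b x = ∑ y, K a b x y * (u b y * ∏ c ∈ (G.neighborFinset b).erase a, α b c y))
    (j : Fin J) (x : Fin n) :
    ∀ s : ℕ, ∀ T : Finset (Fin J), T.card = s → j ∈ T →
      (∀ v ∈ T, ∀ w, G.Adj w v → G.dist j w + 1 = G.dist j v → w ∈ T) →
      tpmpF E G K u α j x T = u j x * ∏ k ∈ G.neighborFinset j, α j k x := by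
  intro s
  induction s with
  | zero =>
    intro T hcard hj _
    rw [Finset.card_eq_zero] at hcard
    subst hcard
    simp at hj
  | succ s ih =>
    intro T hcard hjT hclosed
    by_cases hTj : T = {j}
    · rw [hTj]
      exact tpmpF_base E G horient K u α j x
    · have hv : ∃ v ∈ T, v ≠ j := by
        by_contra h
        push_neg at h
        exact hTj (Finset.eq_singleton_iff_unique_mem.mpr ⟨hjT, fun v hv => h v hv⟩)
      obtain ⟨v0, hv0T, hv0j⟩ := hv
      obtain ⟨ℓ, hℓT, hmax⟩ := Finset.exists_max_image T (fun v => G.dist j v) ⟨v0, hv0T⟩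
      have hd0 : 0 < G.dist j ℓ :=
        lt_of_lt_of_le (htree.isConnected.pos_dist_of_ne (Ne.symm hv0j)) (hmax v0 hv0T)
      have hℓj : ℓ ≠ j := by
        intro h
        rw [h, SimpleGraph.dist_self] at hd0
        omega
      obtain ⟨m, hmadj, hmd⟩ := tpmp_exists_parent htree hℓj
      have hmT : m ∈ T := hclosed ℓ hℓT m hmadj hmd
      have hmℓ : m ≠ ℓ := by
        intro h
        rw [h] at hmd
        omega
      have huniq : ∀ w ∈ T.erase ℓ, G.Adj w ℓ → w = m := by
        intro w hw hwadj
        have hwT := Finset.mem_of_mem_erase hw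
        have hne := tpmp_adj_dist_ne htree j hwadj
        have hle : G.dist j w ≤ G.dist j ℓ := hmax w hwT
        have htri : G.dist j ℓ ≤ G.dist j w + 1 := by
          calc G.dist j ℓ ≤ G.dist j w + G.dist w ℓ := htree.isConnected.dist_triangle
            _ ≤ G.dist j w + 1 := by
                have := le_of_eq (SimpleGraph.dist_eq_one_iff_adj.mpr hwadj)
                omega
        have hwd : G.dist j w + 1 = G.dist j ℓ := by omega
        exact tpmp_parent_unique htree hwadj hmadj hwd hmd
      have hins : insert ℓ (T.erase ℓ) = T := Finset.insert_erase hℓT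
      have hstep := tpmpF_step E G hG horient K hsym u α hα j x (T.erase ℓ) ℓ m
        (Finset.notMem_erase ℓ T) hℓj (Finset.mem_erase.mpr ⟨hmℓ, hmT⟩) hmadj huniq
      rw [hins] at hstep
      rw [hstep]
      apply ih
      · rw [Finset.card_erase_of_mem hℓT, hcard]; omega
      · exact Finset.mem_erase.mpr ⟨Ne.symm hℓj, hjT⟩
      · intro v hv w hadj hdist
        have hvT := Finset.mem_of_mem_erase hv
        have hwT := hclosed v hvT w hadj hdist
        refine Finset.mem_erase.mpr ⟨?_, hwT⟩
        intro hwe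
        subst hwe
        have h1 : G.dist j v ≤ G.dist j w := hmax v hvT
        omega

/-- Tree-structured projection / message passing: for a tensor factoring over a tree as
`(K ⊙ U)_{i} = Π_{(j₁,j₂)∈ℰ} K^{(j₁,j₂)}_{i_{j₁},i_{j₂}} · Π_j (u_j)_{i_j}`, the marginal at
node `j` equals `u_j ⊙ ⊙_{k ∈ 𝒩_j} α_{(j,k)}`, where the messages `α` satisfy the leaf-based
recursion `α_{(j,k)} = K^{(j,k)} (u_k ⊙ ⊙_{ℓ ∈ 𝒩_k \ {j}} α_{(k,ℓ)})` (for a leaf `k` the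
product is empty, giving `α_{(j,k)} = K^{(j,k)} u_k`). -/
theorem tree_projection_message_passing {n J : ℕ}
    (E : Finset (Fin J × Fin J)) (G : SimpleGraph (Fin J)) [DecidableRel G.Adj]
    (hG : ∀ a b, G.Adj a b ↔ ((a, b) ∈ E ∨ (b, a) ∈ E))
    (horient : ∀ p ∈ E, (p.2, p.1) ∉ E ∧ p.1 ≠ p.2)
    (htree : G.IsTree)
    (K : Fin J → Fin J → Matrix (Fin n) (Fin n) ℝ)
    (hpos : ∀ p ∈ E, ∀ x y, 0 < K p.1 p.2 x y)
    (hsym : ∀ a b, K b a = (K a b).transpose)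
    (u : Fin J → Fin n → ℝ)
    (α : Fin J → Fin J → Fin n → ℝ)
    (hα : ∀ a b, G.Adj a b → ∀ x,
      α a b x = ∑ y, K a b x y * (u b y * ∏ c ∈ (G.neighborFinset b).erase a, α b c y))
    (j : Fin J) (x : Fin n) :
    (∑ i : Fin J → Fin n, if i j = x then
        (∏ e ∈ E, K e.1 e.2 (i e.1) (i e.2)) * ∏ k, u k (i k) else 0)
      = u j x * ∏ k ∈ G.neighborFinset j, α j k x := by
  have h := tpmpF_closed E G hG horient htree K hsym u α hα j x
    (Finset.univ.card) Finset.univ rfl (Finset.mem_univ j)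
    (fun _ _ w _ _ => Finset.mem_univ w)
  rw [← tpmpF_univ E G K u α j x]
  exact h

end TPMPHelpers
end

section
/- Let K be a J-mode tensor that factors according to a tree 𝒯 = (𝒱, ℰ) as K_{i_1,…,i_J} = Π_{(j_1,j_2)∈ℰ} K^{(j_1,j_2)}_{i_{j_1},i_{j_2}} with strictly positive matrices K^{(j_1,j_2)}, and let M = K ⊙ U with U = u_1 ⊗ ⋯ ⊗ u_J for strictly positive vectors u_j. If node k lies on the path between nodes j and ℓ in the tree, then for all indices i_j, i_k, i_ℓ: P_{j,k,ℓ}(M)_{i_j,i_k,i_ℓ} · P_k(M)_{i_k} = P_{j,k}(M)_{i_j,i_k} · P_{k,ℓ}(M)_{i_k,i_ℓ}. In particular, for each fixed i_k the matrix (P_{j,k,ℓ}(M))_{·, i_k, ·} has rank at most 1. -/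
/-!
Let `S` be the set of vertices reachable from `j` without passing through `k`. Since the tree has
a unique path from `j` to `ℓ` and `k` lies on it, `ℓ ∉ S`, and every edge meeting `S` stays in
`S ∪ {k}`. Splitting the edge and vertex factors of `M` accordingly writes `M = F * G` with `F`
depending only on the coordinates in `S ∪ {k}` and `G` only on those outside `S`. Once `i k = y`
is fixed, the sum over `i` separates, so the slice `(x, z) ↦ P_{jkℓ}(M)_{x,y,z}` is an outer
product `a x * b z`. Both claims follow: the marginals are sums of this outer product, and an
outer product has rank at most one.
-/

open Finset

namespace SimpleGraph

variable {V : Type*} {G : SimpleGraph V}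

theorem IsAcyclic.mem_support_of_mem_support_path (hG : G.IsAcyclic) {j k ℓ : V}
    {p : G.Walk j ℓ} (hp : p.IsPath) (hk : k ∈ p.support) (w : G.Walk j ℓ) : k ∈ w.support := by
  classical
  have hw : w.toPath = ⟨p, hp⟩ := (hG.subsingleton_path j ℓ).elim _ _
  exact w.support_toPath_subset_support (hw ▸ hk)

theorem exists_separating_set_of_forall_mem_support {j k ℓ : V}
    (h : ∀ w : G.Walk j ℓ, k ∈ w.support) :
    ∃ S : Set V, j ∈ insert k S ∧ k ∉ S ∧ ℓ ∉ S ∧ ∀ v w, v ∈ S → G.Adj v w → w ∈ insert k S := by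
  refine ⟨{v | ∃ q : G.Walk j v, k ∉ q.support}, ?_, fun ⟨q, hq⟩ => hq q.end_mem_support,
    fun ⟨q, hq⟩ => hq (h q), ?_⟩
  · by_cases hjk : j = k
    · exact .inl hjk
    · exact .inr ⟨.nil, by simpa [eq_comm] using hjk⟩
  · rintro v w ⟨q, hq⟩ hvw
    by_cases hwk : w = k
    · exact .inl hwk
    · exact .inr ⟨q.concat hvw, by simp [Walk.support_concat, hq, Ne.symm hwk]⟩

end SimpleGraph

section DependsOn

variable {ι : Type*} {α : ι → Type*} {β : Type*}

theorem DependsOn.mul [Mul β] {f g : (∀ i, α i) → β} {s : Set ι} (hf : DependsOn f s)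
    (hg : DependsOn g s) : DependsOn (fun x => f x * g x) s :=
  fun _ _ h => congrArg₂ (· * ·) (hf h) (hg h)

theorem dependsOn_prod [CommMonoid β] {γ : Type*} (t : Finset γ) {f : γ → (∀ i, α i) → β}
    {s : Set ι} (hf : ∀ c ∈ t, DependsOn (f c) s) : DependsOn (fun x => ∏ c ∈ t, f c x) s :=
  fun _ _ h => prod_congr rfl fun c hc => hf c hc h

end DependsOn

section TensorMarginals

variable {ι α R : Type*}

theorem exists_mul_dependsOn_of_edges_closed [Fintype ι] [CommMonoid R] (E : Finset (ι × ι))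
    (K : ι → ι → α → α → R) (u : ι → α → R) {S T : Set ι} (hST : S ⊆ T)
    (hE : ∀ e ∈ E, e.1 ∈ S ∨ e.2 ∈ S → e.1 ∈ T ∧ e.2 ∈ T) :
    ∃ F G : (ι → α) → R, DependsOn F T ∧ DependsOn G Sᶜ ∧
      ∀ i, (∏ e ∈ E, K e.1 e.2 (i e.1) (i e.2)) * ∏ v, u v (i v) = F i * G i := by
  classical
  refine ⟨fun i => (∏ e ∈ E with e.1 ∈ S ∨ e.2 ∈ S, K e.1 e.2 (i e.1) (i e.2)) *
      ∏ v with v ∈ S, u v (i v),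
    fun i => (∏ e ∈ E with ¬(e.1 ∈ S ∨ e.2 ∈ S), K e.1 e.2 (i e.1) (i e.2)) *
      ∏ v with v ∉ S, u v (i v), ?_, ?_, fun i => ?_⟩
  · refine (dependsOn_prod _ fun e he => ?_).mul (dependsOn_prod _ fun v hv => ?_)
    · obtain ⟨he, hS⟩ := mem_filter.1 he
      obtain ⟨h₁, h₂⟩ := hE e he hS
      exact fun _ _ h => congrArg₂ (K e.1 e.2) (h _ h₁) (h _ h₂)
    · exact fun _ _ h => congrArg (u v) (h v (hST (mem_filter.1 hv).2))
  · refine (dependsOn_prod _ fun e he => ?_).mul (dependsOn_prod _ fun v hv => ?_)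
    · obtain ⟨h₁, h₂⟩ := not_or.1 (mem_filter.1 he).2
      exact fun _ _ h => congrArg₂ (K e.1 e.2) (h _ h₁) (h _ h₂)
    · exact fun _ _ h => congrArg (u v) (h v (mem_filter.1 hv).2)
  · rw [← prod_filter_mul_prod_filter_not E (fun e => e.1 ∈ S ∨ e.2 ∈ S),
      ← prod_filter_mul_prod_filter_not univ (· ∈ S), mul_mul_mul_comm]

variable [Fintype ι] [DecidableEq ι] [Fintype α] [DecidableEq α] [CommSemiring R]

theorem exists_slice_eq_mul_of_dependsOn {S : Set ι} [DecidablePred (· ∈ S)]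
    {M F G : (ι → α) → R} {j k ℓ : ι} (hM : ∀ i, M i = F i * G i)
    (hF : DependsOn F (insert k S)) (hG : DependsOn G Sᶜ) (hj : j ∈ insert k S) (hk : k ∉ S)
    (hℓ : ℓ ∉ S) (y : α) :
    ∃ a b : α → R, ∀ x z,
      (∑ i : ι → α, if i j = x ∧ i k = y ∧ i ℓ = z then M i else 0) = a x * b z := by
  let e := Equiv.piEquivPiSubtypeProd (· ∈ S) (fun _ : ι => α)
  refine ⟨fun x => ∑ a, if e.symm (a, fun _ => y) j = x then F (e.symm (a, fun _ => y)) else 0,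
    fun z => ∑ b, if b ⟨k, hk⟩ = y ∧ b ⟨ℓ, hℓ⟩ = z then G (e.symm (fun _ => y, b)) else 0,
    fun x z => ?_⟩
  rw [Fintype.sum_mul_sum, ← e.symm.sum_comp, Fintype.sum_prod_type]
  refine sum_congr rfl fun a _ => sum_congr rfl fun b _ => ?_
  have hS : ∀ a b v (hv : v ∈ S), e.symm (a, b) v = a ⟨v, hv⟩ := fun _ _ _ hv => dif_pos hv
  have hSc : ∀ a b v (hv : v ∉ S), e.symm (a, b) v = b ⟨v, hv⟩ := fun _ _ _ hv => dif_neg hv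
  rw [hM, hSc a b k hk, hSc a b ℓ hℓ, ite_zero_mul_ite_zero]
  by_cases hb : b ⟨k, hk⟩ = y
  · have hFab : ∀ v ∈ insert k S, e.symm (a, b) v = e.symm (a, fun _ => y) v := by
      rintro v (rfl | hv)
      · rw [hSc _ _ _ hk, hSc _ _ _ hk, hb]
      · rw [hS _ _ _ hv, hS _ _ _ hv]
    have hGab : ∀ v ∈ Sᶜ, e.symm (a, b) v = e.symm (fun _ => y, b) v :=
      fun v hv => (hSc _ _ v hv).trans (hSc _ _ v hv).symm
    rw [hFab j hj, hF hFab, hG hGab]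
  · simp only [hb, false_and, and_false, if_false]

theorem marginal_mul_eq_of_slice_eq_mul (M : (ι → α) → R) {j k ℓ : ι} {y : α} {a b : α → R}
    (h : ∀ x z, (∑ i : ι → α, if i j = x ∧ i k = y ∧ i ℓ = z then M i else 0) = a x * b z)
    (x z : α) :
    (∑ i : ι → α, if i j = x ∧ i k = y ∧ i ℓ = z then M i else 0)
        * (∑ i : ι → α, if i k = y then M i else 0)
      = (∑ i : ι → α, if i j = x ∧ i k = y then M i else 0)
        * (∑ i : ι → α, if i k = y ∧ i ℓ = z then M i else 0) := by
  have hjk : ∀ x, (∑ i : ι → α, if i j = x ∧ i k = y then M i else 0) = a x * ∑ z, b z := by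
    intro x
    rw [mul_sum, ← sum_congr rfl fun z _ => h x z, sum_comm]
    simp [ite_and]
  have hkl : ∀ z, (∑ i : ι → α, if i k = y ∧ i ℓ = z then M i else 0) = (∑ x, a x) * b z := by
    intro z
    rw [sum_mul, ← sum_congr rfl fun x _ => h x z, sum_comm]
    simp [ite_and]
  have hk : (∑ i : ι → α, if i k = y then M i else 0) = (∑ x, a x) * ∑ z, b z := by
    rw [sum_mul, ← sum_congr rfl fun x _ => hjk x, sum_comm]
    simp [ite_and]
  rw [h, hjk, hkl, hk]
  ring

end TensorMarginals

theorem tree_conditional_independence_general {n J : ℕ}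
    (E : Finset (Fin J × Fin J)) (G : SimpleGraph (Fin J))
    (hG : ∀ a b, G.Adj a b ↔ ((a, b) ∈ E ∨ (b, a) ∈ E))
    (htree : G.IsTree)
    (K : Fin J → Fin J → Matrix (Fin n) (Fin n) ℝ)
    (u : Fin J → Fin n → ℝ)
    (M : (Fin J → Fin n) → ℝ)
    (hM : ∀ i, M i = (∏ e ∈ E, K e.1 e.2 (i e.1) (i e.2)) * ∏ j, u j (i j))
    (j k ℓ : Fin J) (p : G.Walk j ℓ) (hp : p.IsPath) (hk : k ∈ p.support) :
    (∀ x y z : Fin n,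
      (∑ i : Fin J → Fin n, if i j = x ∧ i k = y ∧ i ℓ = z then M i else 0)
          * (∑ i : Fin J → Fin n, if i k = y then M i else 0)
        = (∑ i : Fin J → Fin n, if i j = x ∧ i k = y then M i else 0)
          * (∑ i : Fin J → Fin n, if i k = y ∧ i ℓ = z then M i else 0)) ∧
    (∀ y : Fin n,
      (Matrix.of fun x z =>
        ∑ i : Fin J → Fin n, if i j = x ∧ i k = y ∧ i ℓ = z then M i else 0).rank ≤ 1) := by
  classical
  obtain ⟨S, hjS, hkS, hℓS, hS⟩ := SimpleGraph.exists_separating_set_of_forall_mem_support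
    (htree.isAcyclic.mem_support_of_mem_support_path hp hk)
  have hE : ∀ e ∈ E, e.1 ∈ S ∨ e.2 ∈ S → e.1 ∈ insert k S ∧ e.2 ∈ insert k S := by
    rintro e he (h | h)
    · exact ⟨.inr h, hS _ _ h ((hG _ _).2 (.inl he))⟩
    · exact ⟨hS _ _ h ((hG _ _).2 (.inr he)), .inr h⟩
  obtain ⟨F, F', hF, hF', hFF'⟩ :=
    exists_mul_dependsOn_of_edges_closed E K u (Set.subset_insert k S) hE
  have hslice := exists_slice_eq_mul_of_dependsOn (fun i => (hM i).trans (hFF' i)) hF hF'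
    hjS hkS hℓS
  refine ⟨fun x y z => ?_, fun y => ?_⟩ <;> obtain ⟨a, b, hab⟩ := hslice y
  · exact marginal_mul_eq_of_slice_eq_mul M hab x z
  · convert Matrix.rank_vecMulVec_le a b
    exact Matrix.ext hab

/-- Conditional independence for tree-structured tensors: if `k` lies on the path between
`j` and `ℓ`, then `P_{jkℓ}(M)·P_k(M) = P_{jk}(M)·P_{kℓ}(M)` pointwise; in particular each
slice `(P_{jkℓ}(M))_{·,i_k,·}` has rank at most 1. -/
theorem tree_conditional_independence {n J : ℕ}
    (E : Finset (Fin J × Fin J)) (G : SimpleGraph (Fin J)) [DecidableRel G.Adj]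
    (hG : ∀ a b, G.Adj a b ↔ ((a, b) ∈ E ∨ (b, a) ∈ E))
    (htree : G.IsTree)
    (K : Fin J → Fin J → Matrix (Fin n) (Fin n) ℝ)
    (hpos : ∀ p ∈ E, ∀ x y, 0 < K p.1 p.2 x y)
    (u : Fin J → Fin n → ℝ) (hu : ∀ j x, 0 < u j x)
    (M : (Fin J → Fin n) → ℝ)
    (hM : ∀ i, M i = (∏ e ∈ E, K e.1 e.2 (i e.1) (i e.2)) * ∏ j, u j (i j))
    (j k ℓ : Fin J) (p : G.Walk j ℓ) (hp : p.IsPath) (hk : k ∈ p.support) :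
    (∀ x y z : Fin n,
      (∑ i : Fin J → Fin n, if i j = x ∧ i k = y ∧ i ℓ = z then M i else 0)
          * (∑ i : Fin J → Fin n, if i k = y then M i else 0)
        = (∑ i : Fin J → Fin n, if i j = x ∧ i k = y then M i else 0)
          * (∑ i : Fin J → Fin n, if i k = y ∧ i ℓ = z then M i else 0)) ∧
    (∀ y : Fin n,
      (Matrix.of fun x z =>
        ∑ i : Fin J → Fin n, if i j = x ∧ i k = y ∧ i ℓ = z then M i else 0).rank ≤ 1) :=
  tree_conditional_independence_general E G hG htree K u M hM j k ℓ p hp hk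
end

section
/- Consider the cyclic pairwise optimal transport problem on the triangle graph with cost matrices C^{(1,2)} = C^{(2,3)} = J = [[0,1],[1,0]] and C^{(1,3)} = I (2×2 identity), with fixed marginal μ_1 = (1,1)ᵀ. The choice μ_2 = μ_3 = (1,1)ᵀ with transport plans M^{(1,2)} = M^{(2,3)} = I and M^{(1,3)} = J is feasible (each M^{(j_1,j_2)} is nonnegative with row sums μ_{j_1} and column sums μ_{j_2}) and achieves total cost Σ trace((C^{(j_1,j_2)})ᵀ M^{(j_1,j_2)}) = 0, which is optimal since all costs and plans are nonnegative. -/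
/-- On the triangle graph with costs `C¹² = C²³ = [[0,1],[1,0]]`, `C¹³ = I` and fixed
marginal `μ₁ = (1,1)ᵀ`, the plans `M¹² = M²³ = I`, `M¹³ = J` (with `μ₂ = μ₃ = (1,1)ᵀ`) are
feasible with total cost `0`, which is optimal since all costs and plans are nonnegative. -/
theorem pairwise_cycle_zero_cost
    (C12 C23 C13 M12 M23 M13 : Matrix (Fin 2) (Fin 2) ℝ)
    (hC12 : ∀ i j, C12 i j = if i = j then 0 else 1)
    (hC23 : ∀ i j, C23 i j = if i = j then 0 else 1)
    (hC13 : ∀ i j, C13 i j = if i = j then 1 else 0)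
    (hM12 : ∀ i j, M12 i j = if i = j then 1 else 0)
    (hM23 : ∀ i j, M23 i j = if i = j then 1 else 0)
    (hM13 : ∀ i j, M13 i j = if i = j then 0 else 1) :
    ((∀ i j, 0 ≤ M12 i j) ∧ (∀ i, ∑ j, M12 i j = 1) ∧ (∀ j, ∑ i, M12 i j = 1)) ∧
    ((∀ i j, 0 ≤ M23 i j) ∧ (∀ i, ∑ j, M23 i j = 1) ∧ (∀ j, ∑ i, M23 i j = 1)) ∧
    ((∀ i j, 0 ≤ M13 i j) ∧ (∀ i, ∑ j, M13 i j = 1) ∧ (∀ j, ∑ i, M13 i j = 1)) ∧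
    ((∑ i, ∑ j, C12 i j * M12 i j) + (∑ i, ∑ j, C23 i j * M23 i j)
        + (∑ i, ∑ j, C13 i j * M13 i j) = 0) ∧
    (∀ (N12 N23 N13 : Matrix (Fin 2) (Fin 2) ℝ) (μ2 μ3 : Fin 2 → ℝ),
      (∀ i j, 0 ≤ N12 i j) → (∀ i j, 0 ≤ N23 i j) → (∀ i j, 0 ≤ N13 i j) →
      (∀ i, ∑ j, N12 i j = 1) → (∀ j, ∑ i, N12 i j = μ2 j) →
      (∀ i, ∑ j, N23 i j = μ2 i) → (∀ j, ∑ i, N23 i j = μ3 j) →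
      (∀ i, ∑ j, N13 i j = 1) → (∀ j, ∑ i, N13 i j = μ3 j) →
      0 ≤ (∑ i, ∑ j, C12 i j * N12 i j) + (∑ i, ∑ j, C23 i j * N23 i j)
          + (∑ i, ∑ j, C13 i j * N13 i j)) := by
  refine ⟨⟨?_, ?_, ?_⟩, ⟨?_, ?_, ?_⟩, ⟨?_, ?_, ?_⟩, ?_, ?_⟩
  all_goals try (intro i j; simp [hM12, hM23, hM13]; split <;> norm_num)
  all_goals try (intro i; fin_cases i <;> simp [Fin.sum_univ_two, hM12, hM23, hM13])
  · simp [Fin.sum_univ_two, hC12, hC23, hC13, hM12, hM23, hM13]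
  · intro N12 N23 N13 μ2 μ3 h12 h23 h13 _ _ _ _ _ _
    have key : ∀ (C N : Matrix (Fin 2) (Fin 2) ℝ),
        (∀ i j, C i j = 0 ∨ C i j = 1) → (∀ i j, 0 ≤ N i j) →
        0 ≤ ∑ i, ∑ j, C i j * N i j := by
      intro C N hC hN
      apply Finset.sum_nonneg; intro i _
      apply Finset.sum_nonneg; intro j _
      rcases hC i j with h | h <;> simp [h, hN i j]
    have k1 := key C12 N12 (fun i j => by rw [hC12]; split <;> simp) h12
    have k2 := key C23 N23 (fun i j => by rw [hC23]; split <;> simp) h23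
    have k3 := key C13 N13 (fun i j => by rw [hC13]; split <;> simp) h13
    linarith
end

section
/- On the triangle graph with cost matrices C^{(1,2)} = C^{(2,3)} = [[0,1],[1,0]] and C^{(1,3)} = I_2, the multi-marginal cost tensor C_{i_1,i_2,i_3} = C^{(1,2)}_{i_1,i_2} + C^{(2,3)}_{i_2,i_3} + C^{(1,3)}_{i_1,i_3} is elementwise strictly positive. Consequently, any nonnegative tensor M ∈ ℝ^{2×2×2}_{≥0} with P_1(M) = (1,1)ᵀ has ⟨C, M⟩ > 0, so the multi-marginal optimal transport value with marginal constraint μ_1 = (1,1)ᵀ is strictly positive, while the corresponding pairwise formulation attains value 0. -/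
/-- On the triangle graph the multi-marginal cost tensor is elementwise strictly positive,
hence any nonnegative tensor with first marginal `(1,1)ᵀ` has strictly positive cost, while
the pairwise formulation attains the value `0`. -/
theorem multimarginal_vs_pairwise_cycle
    (C : Fin 2 → Fin 2 → Fin 2 → ℝ)
    (hC : ∀ i1 i2 i3, C i1 i2 i3 =
      (if i1 = i2 then (0 : ℝ) else 1) + (if i2 = i3 then (0 : ℝ) else 1)
        + (if i1 = i3 then (1 : ℝ) else 0)) :
    (∀ i1 i2 i3, 0 < C i1 i2 i3) ∧
    (∀ M : Fin 2 → Fin 2 → Fin 2 → ℝ,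
      (∀ i1 i2 i3, 0 ≤ M i1 i2 i3) → (∀ i1, (∑ i2, ∑ i3, M i1 i2 i3) = 1) →
      0 < ∑ i1, ∑ i2, ∑ i3, C i1 i2 i3 * M i1 i2 i3) ∧
    (∃ (M12 M23 M13 : Matrix (Fin 2) (Fin 2) ℝ) (μ2 μ3 : Fin 2 → ℝ),
      (∀ i j, 0 ≤ M12 i j) ∧ (∀ i j, 0 ≤ M23 i j) ∧ (∀ i j, 0 ≤ M13 i j) ∧
      (∀ i, ∑ j, M12 i j = 1) ∧ (∀ j, ∑ i, M12 i j = μ2 j) ∧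
      (∀ i, ∑ j, M23 i j = μ2 i) ∧ (∀ j, ∑ i, M23 i j = μ3 j) ∧
      (∀ i, ∑ j, M13 i j = 1) ∧ (∀ j, ∑ i, M13 i j = μ3 j) ∧
      (∑ i, ∑ j, (if i = j then (0 : ℝ) else 1) * M12 i j)
        + (∑ i, ∑ j, (if i = j then (0 : ℝ) else 1) * M23 i j)
        + (∑ i, ∑ j, (if i = j then (1 : ℝ) else 0) * M13 i j) = 0) := by
  have hge : ∀ i1 i2 i3, (1 : ℝ) ≤ C i1 i2 i3 := by
    intro i1 i2 i3
    rw [hC]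
    fin_cases i1 <;> fin_cases i2 <;> fin_cases i3 <;> norm_num
  refine ⟨fun i1 i2 i3 => lt_of_lt_of_le one_pos (hge i1 i2 i3), ?_, ?_⟩
  · intro M hM hmarg
    have key : (2 : ℝ) ≤ ∑ i1, ∑ i2, ∑ i3, C i1 i2 i3 * M i1 i2 i3 := by
      have h1 : ∑ i1, ∑ i2, ∑ i3, M i1 i2 i3
          ≤ ∑ i1, ∑ i2, ∑ i3, C i1 i2 i3 * M i1 i2 i3 := by
        refine Finset.sum_le_sum fun i1 _ => Finset.sum_le_sum fun i2 _ =>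
          Finset.sum_le_sum fun i3 _ => ?_
        nlinarith [hge i1 i2 i3, hM i1 i2 i3]
      have h2 : ∑ i1, ∑ i2, ∑ i3, M i1 i2 i3 = 2 := by
        rw [Fin.sum_univ_two, hmarg, hmarg]; norm_num
      linarith
    linarith
  · refine ⟨1, 1, Matrix.of ![![0,1],![1,0]], fun _ => 1, fun _ => 1, ?_, ?_, ?_,
      ?_, ?_, ?_, ?_, ?_, ?_, ?_⟩ <;>
    first
      | (intro i j; fin_cases i <;> fin_cases j <;>
          simp [Matrix.one_apply] <;> norm_num)
      | (intro i; fin_cases i <;>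
          simp [Fin.sum_univ_two, Matrix.one_apply] <;> norm_num)
      | (simp [Fin.sum_univ_two, Matrix.one_apply] <;> norm_num)
end

section
/- (Optimality of diagonal scaling form for entropic OT) Let K ∈ ℝ^{n×n}_{>0}, and μ_1, μ_2 ∈ ℝ^n_{>0} with 𝟏ᵀμ_1 = 𝟏ᵀμ_2. If M* = diag(u_1) K diag(u_2) for strictly positive vectors u_1, u_2 satisfies M*𝟏 = μ_1 and (M*)ᵀ𝟏 = μ_2, then M* is the unique minimizer of H(M | K) over all nonnegative matrices M with M𝟏 = μ_1 and Mᵀ𝟏 = μ_2. -/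
lemma kl_entry_nonneg (m x : ℝ) (hm : 0 < m) (hx : 0 ≤ x) :
    0 ≤ x * Real.log (x / m) - x + m := by
  rcases eq_or_lt_of_le hx with h | h
  · simp [← h]; linarith
  · have h1 : Real.log (m / x) ≤ m / x - 1 := Real.log_le_sub_one_of_pos (by positivity)
    have h2 : Real.log (x / m) = - Real.log (m / x) := by
      rw [← Real.log_inv]; congr 1; field_simp
    have hmx : x * (m / x) = m := by field_simp
    rw [h2]
    nlinarith [mul_le_mul_of_nonneg_left h1 h.le]

lemma kl_entry_pos (m x : ℝ) (hm : 0 < m) (hx : 0 ≤ x) (hne : x ≠ m) :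
    0 < x * Real.log (x / m) - x + m := by
  rcases eq_or_lt_of_le hx with h | h
  · simp [← h]; linarith
  · have hne1 : m / x ≠ 1 := fun hh => by
      rw [div_eq_one_iff_eq h.ne'] at hh
      exact hne hh.symm
    have h1 : Real.log (m / x) < m / x - 1 :=
      Real.log_lt_sub_one_of_pos (by positivity) hne1
    have h2 : Real.log (x / m) = - Real.log (m / x) := by
      rw [← Real.log_inv]; congr 1; field_simp
    have hmx : x * (m / x) = m := by field_simp
    rw [h2]
    nlinarith [mul_lt_mul_of_pos_left h1 h]

/-- A diagonal scaling `M* = diag(u₁) K diag(u₂)` of a strictly positive `K` that satisfies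
the marginal constraints is the unique minimizer of `H(M | K)` over the transport polytope. -/
theorem diag_scaling_optimal {n : ℕ} (K : Matrix (Fin n) (Fin n) ℝ)
    (hK : ∀ i j, 0 < K i j)
    (μ₁ μ₂ : Fin n → ℝ) (hμ₁ : ∀ i, 0 < μ₁ i) (hμ₂ : ∀ i, 0 < μ₂ i)
    (hmass : ∑ i, μ₁ i = ∑ i, μ₂ i)
    (u₁ u₂ : Fin n → ℝ) (hu₁ : ∀ i, 0 < u₁ i) (hu₂ : ∀ i, 0 < u₂ i)
    (Mstar : Matrix (Fin n) (Fin n) ℝ) (hMstar : ∀ i j, Mstar i j = u₁ i * K i j * u₂ j)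
    (hrow : ∀ i, ∑ j, Mstar i j = μ₁ i) (hcol : ∀ j, ∑ i, Mstar i j = μ₂ j) :
    ∀ M : Matrix (Fin n) (Fin n) ℝ, (∀ i j, 0 ≤ M i j) →
      (∀ i, ∑ j, M i j = μ₁ i) → (∀ j, ∑ i, M i j = μ₂ j) →
      ((∑ i, ∑ j, (Mstar i j * Real.log (Mstar i j / K i j) - Mstar i j + K i j))
          ≤ ∑ i, ∑ j, (M i j * Real.log (M i j / K i j) - M i j + K i j)) ∧
      ((∑ i, ∑ j, (M i j * Real.log (M i j / K i j) - M i j + K i j))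
          = (∑ i, ∑ j, (Mstar i j * Real.log (Mstar i j / K i j) - Mstar i j + K i j))
        → M = Mstar) := by
  intro M hM hrowM hcolM
  have hMstarpos : ∀ i j, 0 < Mstar i j := fun i j => by
    rw [hMstar]
    exact mul_pos (mul_pos (hu₁ i) (hK i j)) (hu₂ j)
  -- log of M*/K
  have hlogratio : ∀ i j, Real.log (Mstar i j / K i j)
      = Real.log (u₁ i) + Real.log (u₂ j) := fun i j => by
    have hdiv : Mstar i j / K i j = u₁ i * u₂ j := by
      rw [hMstar, mul_comm (u₁ i) (K i j), mul_assoc, mul_div_cancel_left₀ _ (hK i j).ne']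
    rw [hdiv, Real.log_mul (hu₁ i).ne' (hu₂ j).ne']
  -- entrywise decomposition
  have key : ∀ i j, M i j * Real.log (M i j / K i j) - M i j + K i j
      = (Mstar i j * Real.log (Mstar i j / K i j) - Mstar i j + K i j)
        + (Real.log (u₁ i) + Real.log (u₂ j)) * (M i j - Mstar i j)
        + (M i j * Real.log (M i j / Mstar i j) - M i j + Mstar i j) := by
    intro i j
    have hx : M i j * Real.log (M i j / K i j)
        = M i j * Real.log (M i j / Mstar i j)
          + M i j * (Real.log (u₁ i) + Real.log (u₂ j)) := by
      rcases eq_or_lt_of_le (hM i j) with h | h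
      · simp [← h]
      · rw [Real.log_div h.ne' (hK i j).ne', Real.log_div h.ne' (hMstarpos i j).ne']
        have hlm : Real.log (Mstar i j)
            = Real.log (u₁ i) + Real.log (K i j) + Real.log (u₂ j) := by
          rw [hMstar, Real.log_mul (mul_pos (hu₁ i) (hK i j)).ne' (hu₂ j).ne',
            Real.log_mul (hu₁ i).ne' (hK i j).ne']
        rw [hlm]; ring
    rw [hlogratio i j, hx]; ring
  -- the linear term sums to zero
  have h1 : ∑ i, ∑ j, Real.log (u₁ i) * (M i j - Mstar i j) = 0 := by
    simp_rw [← Finset.mul_sum, Finset.sum_sub_distrib, hrowM, hrow, sub_self, mul_zero,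
      Finset.sum_const_zero]
  have h2 : ∑ i, ∑ j, Real.log (u₂ j) * (M i j - Mstar i j) = 0 := by
    rw [Finset.sum_comm]
    simp_rw [← Finset.mul_sum, Finset.sum_sub_distrib, hcolM, hcol, sub_self, mul_zero,
      Finset.sum_const_zero]
  have hlin : ∑ i, ∑ j, (Real.log (u₁ i) + Real.log (u₂ j)) * (M i j - Mstar i j) = 0 := by
    have expand : ∀ i j : Fin n, (Real.log (u₁ i) + Real.log (u₂ j)) * (M i j - Mstar i j)
        = Real.log (u₁ i) * (M i j - Mstar i j)
          + Real.log (u₂ j) * (M i j - Mstar i j) := fun i j => by ring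
    simp_rw [expand, Finset.sum_add_distrib]
    rw [h1, h2, add_zero]
  -- total decomposition of the objective
  have total : ∑ i, ∑ j, (M i j * Real.log (M i j / K i j) - M i j + K i j)
      = (∑ i, ∑ j, (Mstar i j * Real.log (Mstar i j / K i j) - Mstar i j + K i j))
        + ∑ i, ∑ j, (M i j * Real.log (M i j / Mstar i j) - M i j + Mstar i j) := by
    calc ∑ i, ∑ j, (M i j * Real.log (M i j / K i j) - M i j + K i j)
        = ∑ i, ∑ j, ((Mstar i j * Real.log (Mstar i j / K i j) - Mstar i j + K i j)
            + (Real.log (u₁ i) + Real.log (u₂ j)) * (M i j - Mstar i j)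
            + (M i j * Real.log (M i j / Mstar i j) - M i j + Mstar i j)) := by
          simp_rw [← key]
      _ = _ := by
          simp_rw [Finset.sum_add_distrib]
          rw [hlin]; ring
  have hGnonneg : ∀ (i j : Fin n),
      0 ≤ M i j * Real.log (M i j / Mstar i j) - M i j + Mstar i j := fun i j =>
    kl_entry_nonneg _ _ (hMstarpos i j) (hM i j)
  have hSnonneg : 0 ≤ ∑ i, ∑ j, (M i j * Real.log (M i j / Mstar i j) - M i j + Mstar i j) :=
    Finset.sum_nonneg fun i _ => Finset.sum_nonneg fun j _ => hGnonneg i j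
  constructor
  · linarith [total]
  · intro heq
    have hS0 : ∑ i, ∑ j, (M i j * Real.log (M i j / Mstar i j) - M i j + Mstar i j) = 0 := by
      linarith [total]
    funext i j
    by_contra hne
    have hpos : 0 < M i j * Real.log (M i j / Mstar i j) - M i j + Mstar i j :=
      kl_entry_pos _ _ (hMstarpos i j) (hM i j) hne
    have hr : 0 < ∑ j, (M i j * Real.log (M i j / Mstar i j) - M i j + Mstar i j) :=
      Finset.sum_pos' (fun k _ => hGnonneg i k) ⟨j, Finset.mem_univ j, hpos⟩
    have hs : 0 < ∑ i, ∑ j, (M i j * Real.log (M i j / Mstar i j) - M i j + Mstar i j) :=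
      Finset.sum_pos' (fun k _ => Finset.sum_nonneg fun l _ => hGnonneg k l)
        ⟨i, Finset.mem_univ i, hr⟩
    linarith
end
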